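/- Let $y \mid u \sim N_n(X\beta, \sigma^2 I_n + u\tau^2 \mathbf{1}\mathbf{1}^\top)$ with $P(u=1) = p = 1 - P(u=0)$. Then the posterior probability $P(u=1 \mid y)$ equals $p\left\{p + (1-p)\sqrt{\frac{\sigma^2+n\tau^2}{\sigma^2}}\exp\left(-\frac{n^2\tau^2}{2\sigma^2(\sigma^2+n\tau^2)}(\bar{y}-\bar{x}^\top\beta)^2\right)\right\}^{-1}$, where $\bar{y}$ and $\bar{x}$ are the sample means of the responses and covariate vectors. -/

import Mathlib

/-!
With `J` the all-ones matrix, `J * J = n • J`, so `σ² I + τ² J` has inverse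
`σ⁻² I - τ² / (σ² (σ² + n τ²)) J` and, by the matrix determinant lemma, determinant
`σ^(2n) (σ² + n τ²) / σ²`. The two quadratic forms `rᵀ S⁻¹ r` therefore differ only by a multiple
of `(∑ rᵢ)² = n² d²`, which makes the likelihood ratio `g S₀ / g S₁` the factor in the formula;
Bayes' rule for two hypotheses does the rest.
-/

open Matrix

namespace Matrix

variable {ι : Type*} [Fintype ι]

theorem of_one_mul_of_one {R : Type*} [NonAssocSemiring R] :
    (of fun _ _ => 1 : Matrix ι ι R) * of (fun _ _ => 1) =
      (Fintype.card ι : R) • of fun _ _ => 1 := by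
  ext i j
  simp [mul_apply]

theorem dotProduct_of_one_mulVec {R : Type*} [CommSemiring R] (v : ι → R) :
    v ⬝ᵥ (of fun _ _ => 1 : Matrix ι ι R) *ᵥ v = (∑ i, v i) ^ 2 := by
  simp [dotProduct, mulVec, sq, Finset.sum_mul]

variable {𝕜 : Type*} [Field 𝕜] [DecidableEq ι]

theorem det_smul_one_add_smul_of_one {a : 𝕜} (ha : a ≠ 0) (b : 𝕜) :
    (a • 1 + b • of fun _ _ => 1 : Matrix ι ι 𝕜).det =
      a ^ Fintype.card ι * ((a + Fintype.card ι * b) / a) := by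
  have hsplit : (a • 1 + b • of fun _ _ => 1 : Matrix ι ι 𝕜) =
      a • (1 + replicateCol Unit (fun _ => b / a) * replicateRow Unit (fun _ : ι => (1 : 𝕜))) := by
    ext i j
    by_cases hij : i = j <;> simp [hij, mul_apply, mul_add, mul_div_cancel₀ _ ha]
  rw [hsplit, det_smul, det_one_add_replicateCol_mul_replicateRow]
  congr 1
  simp [dotProduct]
  field_simp

theorem inv_smul_one_add_smul_of_one {a b : 𝕜} (ha : a ≠ 0) (hab : a + Fintype.card ι * b ≠ 0) :
    (a • 1 + b • of fun _ _ => 1 : Matrix ι ι 𝕜)⁻¹ =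
      a⁻¹ • 1 - (b / (a * (a + Fintype.card ι * b))) • of fun _ _ => 1 := by
  apply inv_eq_right_inv
  simp only [add_mul, mul_sub, smul_mul_smul, Matrix.one_mul, Matrix.mul_one, of_one_mul_of_one,
    smul_smul]
  match_scalars
  · simp [ha]
  · have hc : (a + Fintype.card ι * b) * (b / (a * (a + Fintype.card ι * b))) = b * a⁻¹ := by
      field_simp
    linear_combination -hc

theorem dotProduct_inv_smul_one_add_smul_of_one_mulVec {a b : 𝕜} (ha : a ≠ 0)
    (hab : a + Fintype.card ι * b ≠ 0) (v : ι → 𝕜) :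
    v ⬝ᵥ (a • 1 + b • of fun _ _ => 1 : Matrix ι ι 𝕜)⁻¹ *ᵥ v =
      v ⬝ᵥ v / a - b / (a * (a + Fintype.card ι * b)) * (∑ i, v i) ^ 2 := by
  rw [inv_smul_one_add_smul_of_one ha hab, sub_mulVec, smul_mulVec, smul_mulVec, one_mulVec,
    dotProduct_sub, dotProduct_smul, dotProduct_smul, dotProduct_of_one_mulVec, smul_eq_mul,
    smul_eq_mul, inv_mul_eq_div]

end Matrix

open Real in
theorem mul_rpow_neg_half_mul_exp_eq {D₀ D₁ : ℝ} (h₀ : 0 < D₀) (h₁ : 0 < D₁) (c Q₀ Q₁ : ℝ) :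
    c * D₀ ^ (-(1 : ℝ) / 2) * exp (-Q₀ / 2) =
      √(D₁ / D₀) * exp (-(Q₀ - Q₁) / 2) * (c * D₁ ^ (-(1 : ℝ) / 2) * exp (-Q₁ / 2)) := by
  have hsqrt {D : ℝ} (hD : 0 < D) : D ^ (-(1 : ℝ) / 2) = (√D)⁻¹ := by
    rw [sqrt_eq_rpow, ← rpow_neg hD.le]
    norm_num
  have hexp : exp (-(Q₀ - Q₁) / 2) * exp (-Q₁ / 2) = exp (-Q₀ / 2) := by
    rw [← exp_add]
    ring_nf
  rw [hsqrt h₀, hsqrt h₁, sqrt_div' _ h₀.le, ← hexp]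
  have : 0 < √D₀ := sqrt_pos.mpr h₀
  have : 0 < √D₁ := sqrt_pos.mpr h₁
  field_simp

theorem posterior_eq_of_likelihood_ratio {𝕜 : Type*} [Field 𝕜] {p g₀ g₁ K : 𝕜} (hg₁ : g₁ ≠ 0)
    (h : g₀ = K * g₁) : p * g₁ / (p * g₁ + (1 - p) * g₀) = p / (p + (1 - p) * K) := by
  rw [h, show p * g₁ + (1 - p) * (K * g₁) = (p + (1 - p) * K) * g₁ by ring,
    mul_div_mul_right _ _ hg₁]

theorem stmt12_general (n q : ℕ) (hn : 1 ≤ n) (σ2 τ2 p : ℝ) (hσ : 0 < σ2) (hτ : 0 < τ2)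
    (X : Matrix (Fin n) (Fin q) ℝ) (β : Fin q → ℝ) (y : Fin n → ℝ) :
    let J : Matrix (Fin n) (Fin n) ℝ := Matrix.of fun _ _ => 1
    let S0 : Matrix (Fin n) (Fin n) ℝ := σ2 • (1 : Matrix (Fin n) (Fin n) ℝ)
    let S1 : Matrix (Fin n) (Fin n) ℝ := σ2 • (1 : Matrix (Fin n) (Fin n) ℝ) + τ2 • J
    -- multivariate normal density of `N_n(Xβ, S)` evaluated at `y`
    let g : Matrix (Fin n) (Fin n) ℝ → ℝ := fun S =>
      (2 * Real.pi) ^ (-(n : ℝ) / 2) * S.det ^ (-(1 : ℝ) / 2) *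
        Real.exp (-((y - X.mulVec β) ⬝ᵥ S⁻¹.mulVec (y - X.mulVec β)) / 2)
    -- the residual of sample means `ȳ - x̄ᵀβ`
    let d : ℝ := (∑ i, (y i - X.mulVec β i)) / n
    p * g S1 / (p * g S1 + (1 - p) * g S0)
      = p / (p + (1 - p) * Real.sqrt ((σ2 + n * τ2) / σ2) *
          Real.exp (-(n ^ 2 * τ2 / (2 * σ2 * (σ2 + n * τ2))) * d ^ 2)) := by
  intro J S0 S1 g d
  set r := y - X *ᵥ β
  have hn0 : (n : ℝ) ≠ 0 := by positivity
  have hσn : 0 < σ2 + n * τ2 := by positivity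
  have hdet0 : S0.det = σ2 ^ n := by simp [S0]
  have hdet1 : S1.det = σ2 ^ n * ((σ2 + n * τ2) / σ2) := by
    simpa only [Fintype.card_fin] using det_smul_one_add_smul_of_one (ι := Fin n) hσ.ne' τ2
  have hQ0 : r ⬝ᵥ S0⁻¹ *ᵥ r = r ⬝ᵥ r / σ2 := by
    simpa using
      dotProduct_inv_smul_one_add_smul_of_one_mulVec hσ.ne' (b := 0) (by simpa using hσ.ne') r
  have hQ1 : r ⬝ᵥ S1⁻¹ *ᵥ r = r ⬝ᵥ r / σ2 - τ2 / (σ2 * (σ2 + n * τ2)) * (∑ i, r i) ^ 2 := by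
    simpa only [Fintype.card_fin] using
      dotProduct_inv_smul_one_add_smul_of_one_mulVec hσ.ne' (by simpa using hσn.ne') r
  have hsum : ∑ i, r i = n * d := by
    simp only [d, r, Pi.sub_apply]
    field_simp
  have hdet0_pos : 0 < S0.det := by rw [hdet0]; positivity
  have hdet1_pos : 0 < S1.det := by rw [hdet1]; positivity
  have hratio : S1.det / S0.det = (σ2 + n * τ2) / σ2 := by
    rw [hdet0, hdet1]
    field_simp
  have hexponent : -(r ⬝ᵥ S0⁻¹ *ᵥ r - r ⬝ᵥ S1⁻¹ *ᵥ r) / 2 =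
      -(n ^ 2 * τ2 / (2 * σ2 * (σ2 + n * τ2))) * d ^ 2 := by
    rw [hQ0, hQ1, hsum]
    field_simp
    ring
  have hg1 : 0 < g S1 := by
    simp only [g]
    positivity
  rw [mul_assoc (1 - p)]
  refine posterior_eq_of_likelihood_ratio hg1.ne' ?_
  simp only [g]
  rw [mul_rpow_neg_half_mul_exp_eq hdet0_pos hdet1_pos, hratio, hexponent]

theorem stmt12 (n q : ℕ) (hn : 1 ≤ n) (σ2 τ2 p : ℝ) (hσ : 0 < σ2) (hτ : 0 < τ2)
    (hp : p ∈ Set.Ioo (0 : ℝ) 1)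
    (X : Matrix (Fin n) (Fin q) ℝ) (β : Fin q → ℝ) (y : Fin n → ℝ) :
    let J : Matrix (Fin n) (Fin n) ℝ := Matrix.of fun _ _ => 1
    let S0 : Matrix (Fin n) (Fin n) ℝ := σ2 • (1 : Matrix (Fin n) (Fin n) ℝ)
    let S1 : Matrix (Fin n) (Fin n) ℝ := σ2 • (1 : Matrix (Fin n) (Fin n) ℝ) + τ2 • J
    -- multivariate normal density of `N_n(Xβ, S)` evaluated at `y`
    let g : Matrix (Fin n) (Fin n) ℝ → ℝ := fun S =>
      (2 * Real.pi) ^ (-(n : ℝ) / 2) * S.det ^ (-(1 : ℝ) / 2) *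
        Real.exp (-((y - X.mulVec β) ⬝ᵥ S⁻¹.mulVec (y - X.mulVec β)) / 2)
    -- the residual of sample means `ȳ - x̄ᵀβ`
    let d : ℝ := (∑ i, (y i - X.mulVec β i)) / n
    p * g S1 / (p * g S1 + (1 - p) * g S0)
      = p / (p + (1 - p) * Real.sqrt ((σ2 + n * τ2) / σ2) *
          Real.exp (-(n ^ 2 * τ2 / (2 * σ2 * (σ2 + n * τ2))) * d ^ 2)) :=
  stmt12_general n q hn σ2 τ2 p hσ hτ X β y
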